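/- If Γ is a finite oriented cycle-free graph, γ is a poset-compatible covering subgraph, and (V_1, V_2) is an admissible cut of Γ such that every block of γ is contained in V_1 or in V_2, then the restriction of γ to V_i is a poset-compatible covering subgraph of the induced subgraph Γ(V_i), and (Γ/γ)(U_i) is isomorphic to Γ(V_i)/(γ ∩ Γ(V_i)), where U_i is the set of blocks of γ contained in V_i. -/

import Mathlib

universe u v

variable {V : Type u} {E : Type v}

/-- One directed step along an edge of the oriented graph `(src, tgt)`. -/
def Step (src tgt : E → V) (a b : V) : Prop := ∃ e, src e = a ∧ tgt e = b

/-- Strict path order: there is a nonempty directed path from `a` to `b`. -/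
def PathLt (src tgt : E → V) : V → V → Prop := Relation.TransGen (Step src tgt)

/-- Weak path order: there is a (possibly empty) directed path from `a` to `b`. -/
def PathLe (src tgt : E → V) : V → V → Prop := Relation.ReflTransGen (Step src tgt)

/-- The graph is cycle-free: no nonempty directed path from a vertex to itself. -/
def CycleFree (src tgt : E → V) : Prop := ∀ x, ¬ PathLt src tgt x x

/-- Undirected step inside the vertex subset `P` (edge traversed forwards or backwards,
with both endpoints in `P`). -/
def UStepIn (src tgt : E → V) (P : Set V) (a b : V) : Prop :=
  a ∈ P ∧ b ∈ P ∧ ∃ e, (src e = a ∧ tgt e = b) ∨ (src e = b ∧ tgt e = a)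

/-- `P` induces a connected subgraph: any two of its vertices are joined by a walk
inside `P`. -/
def ConnSet (src tgt : E → V) (P : Set V) : Prop :=
  ∀ v ∈ P, ∀ w ∈ P, Relation.ReflTransGen (UStepIn src tgt P) v w

/-- A covering subgraph: a partition (setoid) of the vertex set all of whose blocks
induce connected subgraphs. -/
def CoveringSetoid (src tgt : E → V) (s : Setoid V) : Prop :=
  ∀ v : V, ConnSet src tgt {w | s.r v w}

/-- Edges of the contracted graph `Γ/s`: edges of `Γ` joining distinct blocks. -/
def CEdge (src tgt : E → V) (s : Setoid V) : Type v := {e : E // ¬ s.r (src e) (tgt e)}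

/-- Source map of the contracted graph. -/
def csrc (src tgt : E → V) (s : Setoid V) (e : CEdge src tgt s) : Quotient s :=
  Quotient.mk s (src e.1)

/-- Target map of the contracted graph. -/
def ctgt (src tgt : E → V) (s : Setoid V) (e : CEdge src tgt s) : Quotient s :=
  Quotient.mk s (tgt e.1)

/-- Edges of the induced subgraph `Γ(P)`: edges with both endpoints in `P`. -/
def IEdge (src tgt : E → V) (P : Set V) : Type v := {e : E // src e ∈ P ∧ tgt e ∈ P}

/-- Source map of the induced subgraph. -/
def isrc (src tgt : E → V) (P : Set V) (e : IEdge src tgt P) : P := ⟨src e.1, e.2.1⟩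

/-- Target map of the induced subgraph. -/
def itgt (src tgt : E → V) (P : Set V) (e : IEdge src tgt P) : P := ⟨tgt e.1, e.2.2⟩

/-- `A < B` for vertex subsets: every comparable pair `a ∈ A`, `b ∈ B` satisfies `a < b`. -/
def SetLt (src tgt : E → V) (A B : Set V) : Prop :=
  ∀ a ∈ A, ∀ b ∈ B, (PathLt src tgt a b ∨ PathLt src tgt b a) → PathLt src tgt a b

/-- Admissible cut `(V₁, V₂)` of the graph: a partition of the vertex set into two
pieces with `V₂ < V₁`. -/
def AdmCut (src tgt : E → V) (V1 V2 : Set V) : Prop :=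
  Disjoint V1 V2 ∧ V1 ∪ V2 = Set.univ ∧ SetLt src tgt V2 V1

/-- Directed step staying inside `P` (path order of the induced subgraph). -/
def StepIn (src tgt : E → V) (P : Set V) (a b : V) : Prop :=
  a ∈ P ∧ b ∈ P ∧ ∃ e, src e = a ∧ tgt e = b

/-- Strict path order of the subgraph induced on `P`. -/
def PathLtIn (src tgt : E → V) (P : Set V) : V → V → Prop :=
  Relation.TransGen (StepIn src tgt P)

/-- `A < B` relative to the induced subgraph on `P`. -/
def SetLtIn (src tgt : E → V) (P A B : Set V) : Prop :=
  ∀ a ∈ A, ∀ b ∈ B, (PathLtIn src tgt P a b ∨ PathLtIn src tgt P b a) →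
    PathLtIn src tgt P a b

/-- Admissible cut `(V₁, V₂)` of the subgraph of `Γ` induced on `P`. -/
def AdmCutIn (src tgt : E → V) (P V1 V2 : Set V) : Prop :=
  V1 ⊆ P ∧ V2 ⊆ P ∧ Disjoint V1 V2 ∧ V1 ∪ V2 = P ∧ SetLtIn src tgt P V2 V1

/-- Isomorphism of oriented graphs. -/
def GIso {V1 E1 V2 E2 : Type*} (src1 tgt1 : E1 → V1) (src2 tgt2 : E2 → V2) : Prop :=
  ∃ (f : V1 ≃ V2) (g : E1 ≃ E2),
    (∀ e, f (src1 e) = src2 (g e)) ∧ ∀ e, f (tgt1 e) = tgt2 (g e)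

/-!
Every block of `s` lies in `V₁` or in `V₂ = V₁ᶜ`, so both are unions of blocks. For such a set
`W`, a block inside `W` stays connected in `Γ(W)`, because its walks never leave it; the block map
`W / s → V / s` is a graph homomorphism, so acyclicity of `Γ/s` pulls back to `Γ(W)/s`; and it
is a bijection onto the blocks inside `W` under which the edges of `Γ(W)` between distinct blocks
are exactly the edges of `Γ/s` between blocks inside `W`.
-/

section Restriction

variable {src tgt : E → V} {s : Setoid V} {W : Set V}

theorem CycleFree.of_step_map {V' E' : Type*} {src' tgt' : E' → V'}
    (h : CycleFree src tgt) (f : V' → V)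
    (hf : ∀ a b, Step src' tgt' a b → Step src tgt (f a) (f b)) : CycleFree src' tgt' :=
  fun x hx => h (f x) (Relation.TransGen.lift f hf x x hx)

theorem ConnSet.preimage_val {P : Set V} (hP : ConnSet src tgt P) (hPW : P ⊆ W) :
    ConnSet (isrc src tgt W) (itgt src tgt W) (Subtype.val ⁻¹' P) := by
  intro a ha b hb
  suffices walk : ∀ c, Relation.ReflTransGen (UStepIn src tgt P) a.1 c → ∀ hc : c ∈ P,
      Relation.ReflTransGen (UStepIn (isrc src tgt W) (itgt src tgt W) (Subtype.val ⁻¹' P))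
        a ⟨c, hPW hc⟩ from walk b.1 (hP _ ha _ hb) hb
  intro c hac
  induction hac with
  | refl => exact fun _ => .refl
  | @tail c d _ hcd ih =>
    obtain ⟨hc, hd, e, he⟩ := hcd
    intro _
    have heW : src e ∈ W ∧ tgt e ∈ W := by
      rcases he with ⟨rfl, rfl⟩ | ⟨rfl, rfl⟩
      exacts [⟨hPW hc, hPW hd⟩, ⟨hPW hd, hPW hc⟩]
    refine (ih hc).tail ⟨hc, hd, ⟨e, heW⟩, ?_⟩
    rcases he with ⟨rfl, rfl⟩ | ⟨rfl, rfl⟩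
    exacts [.inl ⟨rfl, rfl⟩, .inr ⟨rfl, rfl⟩]

theorem cycleFree_contract_comap_val (hpc : CycleFree (csrc src tgt s) (ctgt src tgt s)) :
    CycleFree (csrc (isrc src tgt W) (itgt src tgt W) (s.comap Subtype.val))
      (ctgt (isrc src tgt W) (itgt src tgt W) (s.comap Subtype.val)) := by
  refine hpc.of_step_map
    (Quotient.lift (fun v : W => Quotient.mk s v.1) fun _ _ hab => Quotient.sound hab) ?_
  rintro _ _ ⟨⟨⟨e, _⟩, hne⟩, rfl, rfl⟩
  exact ⟨⟨e, hne⟩, rfl, rfl⟩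

theorem CoveringSetoid.comap_val (hs : CoveringSetoid src tgt s)
    (hW : ∀ v w : V, s.r v w → (v ∈ W ↔ w ∈ W)) :
    CoveringSetoid (isrc src tgt W) (itgt src tgt W) (s.comap Subtype.val) :=
  fun v => (hs v.1).preimage_val fun _ hw => (hW _ _ hw).mp v.2

theorem gIso_induced_contract_comap_val (hW : ∀ v w : V, s.r v w → (v ∈ W ↔ w ∈ W)) :
    GIso (isrc (csrc src tgt s) (ctgt src tgt s) {x : Quotient s | ∃ v ∈ W, Quotient.mk s v = x})
      (itgt (csrc src tgt s) (ctgt src tgt s) {x : Quotient s | ∃ v ∈ W, Quotient.mk s v = x})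
      (csrc (isrc src tgt W) (itgt src tgt W) (s.comap Subtype.val))
      (ctgt (isrc src tgt W) (itgt src tgt W) (s.comap Subtype.val)) := by
  set U : Set (Quotient s) := {x | ∃ v ∈ W, Quotient.mk s v = x}
  let g : Quotient (s.comap (Subtype.val : W → V)) → U :=
    Quotient.lift (fun v : W => ⟨Quotient.mk s v.1, v.1, v.2, rfl⟩)
      fun _ _ hab => Subtype.ext (Quotient.sound hab)
  have hg : Function.Bijective g := by
    constructor
    · rintro ⟨a⟩ ⟨b⟩ hab
      exact Quotient.sound (Quotient.exact (congrArg Subtype.val hab) :)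
    · rintro ⟨x, v, hv, rfl⟩
      exact ⟨Quotient.mk _ ⟨v, hv⟩, rfl⟩
  have mem_W : ∀ v : V, Quotient.mk s v ∈ U → v ∈ W := by
    rintro v ⟨w, hw, hwv⟩
    exact (hW _ _ (Quotient.exact hwv)).mp hw
  refine ⟨(Equiv.ofBijective g hg).symm,
    ⟨fun e => ⟨⟨e.1.1, mem_W _ e.2.1, mem_W _ e.2.2⟩, e.1.2⟩,
     fun e => ⟨⟨e.1.1, e.2⟩, ⟨_, e.1.2.1, rfl⟩, ⟨_, e.1.2.2, rfl⟩⟩,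
     fun _ => rfl, fun _ => rfl⟩, ?_, ?_⟩ <;>
  exact fun _ => (Equiv.symm_apply_eq _).mpr rfl

end Restriction

theorem stmt14_general (src tgt : E → V)
    (s : Setoid V) (hs : CoveringSetoid src tgt s)
    (hpc : CycleFree (csrc src tgt s) (ctgt src tgt s))
    (V1 V2 : Set V) (hcut : AdmCut src tgt V1 V2)
    (hblk : ∀ v w : V, s.r v w → (v ∈ V1 ↔ w ∈ V1)) :
    (CoveringSetoid (isrc src tgt V1) (itgt src tgt V1) (s.comap Subtype.val) ∧
      CycleFree (csrc (isrc src tgt V1) (itgt src tgt V1) (s.comap Subtype.val))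
        (ctgt (isrc src tgt V1) (itgt src tgt V1) (s.comap Subtype.val)) ∧
      GIso (isrc (csrc src tgt s) (ctgt src tgt s)
              {x : Quotient s | ∃ v ∈ V1, Quotient.mk s v = x})
           (itgt (csrc src tgt s) (ctgt src tgt s)
              {x : Quotient s | ∃ v ∈ V1, Quotient.mk s v = x})
           (csrc (isrc src tgt V1) (itgt src tgt V1) (s.comap Subtype.val))
           (ctgt (isrc src tgt V1) (itgt src tgt V1) (s.comap Subtype.val))) ∧
    (CoveringSetoid (isrc src tgt V2) (itgt src tgt V2) (s.comap Subtype.val) ∧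
      CycleFree (csrc (isrc src tgt V2) (itgt src tgt V2) (s.comap Subtype.val))
        (ctgt (isrc src tgt V2) (itgt src tgt V2) (s.comap Subtype.val)) ∧
      GIso (isrc (csrc src tgt s) (ctgt src tgt s)
              {x : Quotient s | ∃ v ∈ V2, Quotient.mk s v = x})
           (itgt (csrc src tgt s) (ctgt src tgt s)
              {x : Quotient s | ∃ v ∈ V2, Quotient.mk s v = x})
           (csrc (isrc src tgt V2) (itgt src tgt V2) (s.comap Subtype.val))
           (ctgt (isrc src tgt V2) (itgt src tgt V2) (s.comap Subtype.val))) := by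
  have hV2 : V2 = V1ᶜ := (isCompl_iff.mpr ⟨hcut.1, codisjoint_iff.mpr hcut.2.1⟩).symm.eq_compl
  have hblk₂ : ∀ v w : V, s.r v w → (v ∈ V2 ↔ w ∈ V2) := fun v w hvw => by
    simpa only [hV2, Set.mem_compl_iff] using not_congr (hblk v w hvw)
  exact ⟨⟨hs.comap_val hblk, cycleFree_contract_comap_val hpc,
      gIso_induced_contract_comap_val hblk⟩,
    ⟨hs.comap_val hblk₂, cycleFree_contract_comap_val hpc,
      gIso_induced_contract_comap_val hblk₂⟩⟩

/-- if every block of the poset-compatible covering subgraph `s` is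
contained in `V₁` or in `V₂` for an admissible cut `(V₁,V₂)`, then the
restriction of `s` to `Vᵢ` is a poset-compatible covering subgraph of `Γ(Vᵢ)`,
and `(Γ/s)(Uᵢ) ≅ Γ(Vᵢ)/(s ∩ Γ(Vᵢ))` where `Uᵢ` is the set of blocks inside `Vᵢ`. -/
theorem stmt14 [Fintype V] [Fintype E] (src tgt : E → V) (h : CycleFree src tgt)
    (s : Setoid V) (hs : CoveringSetoid src tgt s)
    (hpc : CycleFree (csrc src tgt s) (ctgt src tgt s))
    (V1 V2 : Set V) (hcut : AdmCut src tgt V1 V2)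
    (hblk : ∀ v w : V, s.r v w → (v ∈ V1 ↔ w ∈ V1)) :
    (CoveringSetoid (isrc src tgt V1) (itgt src tgt V1) (s.comap Subtype.val) ∧
      CycleFree (csrc (isrc src tgt V1) (itgt src tgt V1) (s.comap Subtype.val))
        (ctgt (isrc src tgt V1) (itgt src tgt V1) (s.comap Subtype.val)) ∧
      GIso (isrc (csrc src tgt s) (ctgt src tgt s)
              {x : Quotient s | ∃ v ∈ V1, Quotient.mk s v = x})
           (itgt (csrc src tgt s) (ctgt src tgt s)
              {x : Quotient s | ∃ v ∈ V1, Quotient.mk s v = x})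
           (csrc (isrc src tgt V1) (itgt src tgt V1) (s.comap Subtype.val))
           (ctgt (isrc src tgt V1) (itgt src tgt V1) (s.comap Subtype.val))) ∧
    (CoveringSetoid (isrc src tgt V2) (itgt src tgt V2) (s.comap Subtype.val) ∧
      CycleFree (csrc (isrc src tgt V2) (itgt src tgt V2) (s.comap Subtype.val))
        (ctgt (isrc src tgt V2) (itgt src tgt V2) (s.comap Subtype.val)) ∧
      GIso (isrc (csrc src tgt s) (ctgt src tgt s)
              {x : Quotient s | ∃ v ∈ V2, Quotient.mk s v = x})
           (itgt (csrc src tgt s) (ctgt src tgt s)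
              {x : Quotient s | ∃ v ∈ V2, Quotient.mk s v = x})
           (csrc (isrc src tgt V2) (itgt src tgt V2) (s.comap Subtype.val))
           (ctgt (isrc src tgt V2) (itgt src tgt V2) (s.comap Subtype.val))) :=
  stmt14_general src tgt s hs hpc V1 V2 hcut hblk
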